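/- arXiv:2206.06889 — 2 statements merged into one kernel-verified Lean document; each statement's English description precedes it below -/
import Mathlib

section
/- Let ℓ ≥ 2, J ⊆ ℤ/ℓℤ, let θ ∈ ℂ^(ℤ/ℓℤ) be J-standard with Σ_{i ∈ ℤ/ℓℤ} θ_i ≠ 0, let μ be a partition and let b be a removable box of μ of ℓ-residue i ∈ J. Then one of the following holds: (1) A_μ has a one-dimensional subrepresentation S concentrated at the vertex i (with S_∞ = 0 and all quiver maps vanishing on S) such that the quotient framed representation A_μ/S is isomorphic to A_{μ∖b}; or (2) A_μ has a framed subrepresentation T with T_∞ = ℂ that is isomorphic to A_{μ∖b}, and the quotient A_μ/T is one-dimensional, concentrated at the vertex i, with all induced maps zero. -/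
namespace CM

/-- The (non-linear) action of the simple reflection `s_j` on `ℤ^(ℤ/ℓℤ)`. -/
def sInt (ℓ : ℕ) (j : ZMod ℓ) (d : ZMod ℓ → ℤ) : ZMod ℓ → ℤ := fun i =>
  if i = j then (if j = 0 then 1 else 0) + d (j + 1) + d (j - 1) - d j else d i

/-- The linear action of the simple reflection `s_j` on `ℂ^(ℤ/ℓℤ)`.
For `i ≠ j` the coefficient of `θ j` is the number of arrows between `i` and `j`
(which is `2` when `ℓ = 2`). -/
def sC (ℓ : ℕ) (j : ZMod ℓ) (θ : ZMod ℓ → ℂ) : ZMod ℓ → ℂ := fun i =>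
  if i = j then -θ j
  else θ i + ((if i = j - 1 then 1 else 0) + (if i = j + 1 then 1 else 0) : ℂ) * θ j

lemma sC_sC (ℓ : ℕ) (j : ZMod ℓ) (θ : ZMod ℓ → ℂ) : sC ℓ j (sC ℓ j θ) = θ := by
  funext i
  by_cases h : i = j
  · subst h; simp [sC]
  · simp [sC, h]

/-- `s_j` as a bijection of `ℂ^(ℤ/ℓℤ)`. -/
def sPerm (ℓ : ℕ) (j : ZMod ℓ) : Equiv.Perm (ZMod ℓ → ℂ) :=
  ⟨sC ℓ j, sC ℓ j, fun θ => sC_sC ℓ j θ, fun θ => sC_sC ℓ j θ⟩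

/-- The group generated by the operators `s_j`, `j ∈ ℤ/ℓℤ`. -/
def Wgrp (ℓ : ℕ) : Subgroup (Equiv.Perm (ZMod ℓ → ℂ)) :=
  Subgroup.closure (Set.range (sPerm ℓ))

/-- The subgroup generated by the operators `s_j`, `j ∈ J`. -/
def WJ (ℓ : ℕ) (J : Set (ZMod ℓ)) : Subgroup (Equiv.Perm (ZMod ℓ → ℂ)) :=
  Subgroup.closure (sPerm ℓ '' J)

/-- `θ` is `J`-standard if its stabilizer in `W` is exactly `W_J`. -/
def JStandard (ℓ : ℕ) (J : Set (ZMod ℓ)) (θ : ZMod ℓ → ℂ) : Prop :=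
  ∀ w ∈ Wgrp ℓ, ((w : (ZMod ℓ → ℂ) → (ZMod ℓ → ℂ)) θ = θ ↔ w ∈ WJ ℓ J)

/-- The `∞`-residue of a box. -/
def rsd (c : ℕ × ℕ) : ℤ := (c.2 : ℤ) - (c.1 : ℤ)

/-- The `ℓ`-residue of a box. -/
def res (ℓ : ℕ) (c : ℕ × ℕ) : ZMod ℓ := (rsd c : ZMod ℓ)

/-- `Res_ℓ(μ) ∈ ℤ^(ℤ/ℓℤ)`: the number of boxes of each `ℓ`-residue. -/
def Res (ℓ : ℕ) (μ : YoungDiagram) : ZMod ℓ → ℤ := fun i =>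
  ((μ.cells.filter (fun c => res ℓ c = i)).card : ℤ)

/-- The constant vector `δ_ℓ = (1,…,1)`. -/
def delta (ℓ : ℕ) : ZMod ℓ → ℤ := fun _ => 1

/-- A box is removable if deleting it leaves a Young diagram. -/
def IsRemovable (μ : YoungDiagram) (c : ℕ × ℕ) : Prop :=
  c ∈ μ.cells ∧ ∃ ν : YoungDiagram, ν.cells = μ.cells.erase c

/-- A box is addable if adjoining it yields a Young diagram. -/
def IsAddable (μ : YoungDiagram) (c : ℕ × ℕ) : Prop :=
  c ∉ μ.cells ∧ ∃ ν : YoungDiagram, ν.cells = insert c μ.cells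

/-- One step: delete one removable box. -/
def RemoveStep (μ ν : YoungDiagram) : Prop :=
  ∃ c, IsRemovable μ c ∧ ν.cells = μ.cells.erase c

/-- `ν` is obtainable from `μ` by successively deleting removable boxes. -/
def Obtainable (μ ν : YoungDiagram) : Prop :=
  Relation.ReflTransGen RemoveStep μ ν

/-- `λ` is an `ℓ`-core: no partition obtainable from `λ` by deleting removable boxes
differs from `λ` by exactly `ℓ` boxes of pairwise distinct `ℓ`-residues. -/
def IsCore (ℓ : ℕ) (lam : YoungDiagram) : Prop :=
  ¬ ∃ μ : YoungDiagram, Obtainable lam μ ∧ (lam.cells \ μ.cells).card = ℓ ∧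
      Set.InjOn (res ℓ) ↑(lam.cells \ μ.cells)

/-- One step of the `ℓ`-core process: delete (via removable-box deletions) `ℓ` boxes
of pairwise distinct `ℓ`-residues. -/
def CoreStep (ℓ : ℕ) (μ ν : YoungDiagram) : Prop :=
  Obtainable μ ν ∧ (μ.cells \ ν.cells).card = ℓ ∧
    Set.InjOn (res ℓ) ↑(μ.cells \ ν.cells)

/-- `ν` is the `ℓ`-core of `λ`: it is an `ℓ`-core reached from `λ` by the core process. -/
def ReachesCore (ℓ : ℕ) (lam ν : YoungDiagram) : Prop :=
  Relation.ReflTransGen (CoreStep ℓ) lam ν ∧ IsCore ℓ ν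

/-- `θ` extended to `ℤ` by `θ_j = θ_{j mod ℓ}`. -/
def θZ (ℓ : ℕ) (θ : ZMod ℓ → ℂ) (j : ℤ) : ℂ := θ (j : ZMod ℓ)

/-- The sum `θ_a + θ_{a+1} + ⋯ + θ_b`. -/
noncomputable def Ssum (ℓ : ℕ) (θ : ZMod ℓ → ℂ) (a b : ℤ) : ℂ :=
  ∑ i ∈ Finset.Icc a b, θZ ℓ θ i

/-- The (0-indexed) hook number of a box. -/
def hk (c : ℕ × ℕ) : ℕ := min c.1 c.2

/-- The arm length `a_r` of the `r`-th hook (`r` 0-indexed). -/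
def arm (μ : YoungDiagram) (r : ℕ) : ℤ := (μ.rowLen r : ℤ) - r - 1

/-- The leg length `b_r` of the `r`-th hook (`r` 0-indexed). -/
def leg (μ : YoungDiagram) (r : ℕ) : ℤ := (μ.colLen r : ℤ) - r - 1

/-- `β_r = θ_{-b_r} + ⋯ + θ_{a_r}`. -/
noncomputable def beta (ℓ : ℕ) (θ : ZMod ℓ → ℂ) (μ : YoungDiagram) (r : ℕ) : ℂ :=
  Ssum ℓ θ (-(leg μ r)) (arm μ r)

/-- The underlying vector space of `A_μ`, with basis indexed by the boxes of `μ`: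
the box of hook number `r` and `∞`-residue `j` corresponds to the basis vector `v_{r,j}`. -/
abbrev V (μ : YoungDiagram) : Type := (↥μ.cells → ℂ)

/-- Matrix coefficient of `Y`: the coefficient of `v_{hk c', rsd c'}` in `Y(v_{hk c, rsd c})`. -/
noncomputable def cY (ℓ : ℕ) (θ : ZMod ℓ → ℂ) (μ : YoungDiagram) (c c' : ℕ × ℕ) : ℂ :=
  if rsd c' = rsd c + 1 then
    (if rsd c < 0 then
       (if hk c' = hk c then Ssum ℓ θ (-(leg μ (hk c))) (rsd c)
        else if hk c < hk c' then beta ℓ θ μ (hk c') else 0)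
     else
       (if hk c' = hk c then -Ssum ℓ θ (rsd c + 1) (arm μ (hk c))
        else if hk c' < hk c then -(beta ℓ θ μ (hk c')) else 0))
  else 0

/-- Matrix coefficient of `X`: `X(v_{r,j}) = v_{r,j-1}` (or `0`). -/
def cX (c c' : ℕ × ℕ) : ℂ :=
  if hk c' = hk c ∧ rsd c' = rsd c - 1 then 1 else 0

/-- The linear map on `V μ` with matrix coefficients `K`. -/
noncomputable def matMap (μ : YoungDiagram) (K : ℕ × ℕ → ℕ × ℕ → ℂ) :
    V μ →ₗ[ℂ] V μ where
  toFun f := fun c' => ∑ c : ↥μ.cells, K c c' * f c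
  map_add' f g := by
    funext c'
    simp only [Pi.add_apply, mul_add, Finset.sum_add_distrib]
  map_smul' a f := by
    funext c'
    simp only [Pi.smul_apply, smul_eq_mul, RingHom.id_apply, Finset.mul_sum]
    exact Finset.sum_congr rfl fun c _ => by ring

/-- The map `X` of the representation `A_μ`. -/
noncomputable def Xmap (μ : YoungDiagram) : V μ →ₗ[ℂ] V μ := matMap μ cX

/-- The map `Y` of the representation `A_μ`. -/
noncomputable def Ymap (ℓ : ℕ) (θ : ZMod ℓ → ℂ) (μ : YoungDiagram) : V μ →ₗ[ℂ] V μ :=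
  matMap μ (cY ℓ θ μ)

/-- The map `x` of the representation `A_μ`: `x(1) = -∑_r β_r v_{r,0}`. -/
noncomputable def xmap (ℓ : ℕ) (θ : ZMod ℓ → ℂ) (μ : YoungDiagram) : ℂ →ₗ[ℂ] V μ where
  toFun z := fun c => if rsd (c : ℕ × ℕ) = 0 then -(beta ℓ θ μ (hk (c : ℕ × ℕ))) * z else 0
  map_add' z w := by
    funext c
    by_cases h : rsd (c : ℕ × ℕ) = 0 <;> simp [h] <;> ring
  map_smul' a z := by
    funext c
    by_cases h : rsd (c : ℕ × ℕ) = 0 <;> simp [h] <;> ring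

/-- The map `y` of the representation `A_μ`: `y(v_{r,0}) = 1`, `y(v_{r,j}) = 0` for `j ≠ 0`. -/
noncomputable def ymap (μ : YoungDiagram) : V μ →ₗ[ℂ] ℂ where
  toFun f := ∑ c : ↥μ.cells, if rsd (c : ℕ × ℕ) = 0 then f c else 0
  map_add' f g := by
    rw [← Finset.sum_add_distrib]
    exact Finset.sum_congr rfl fun c _ => by
      by_cases h : rsd (c : ℕ × ℕ) = 0 <;> simp [h]
  map_smul' a f := by
    simp only [RingHom.id_apply, smul_eq_mul, Finset.mul_sum]
    exact Finset.sum_congr rfl fun c _ => by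
      by_cases h : rsd (c : ℕ × ℕ) = 0 <;> simp [h]

/-- The degree-`j` graded piece `V_j` of `V μ` (spanned by the `v_{r,j}`). -/
noncomputable def Vgr (μ : YoungDiagram) (j : ℤ) : Submodule ℂ (V μ) where
  carrier := {f | ∀ c : ↥μ.cells, rsd (c : ℕ × ℕ) ≠ j → f c = 0}
  add_mem' := fun {f g} hf hg c hc => by
    simp only [Pi.add_apply, hf c hc, hg c hc, add_zero]
  zero_mem' := fun c _ => rfl
  smul_mem' := fun a {f} hf c hc => by
    simp only [Pi.smul_apply, hf c hc, smul_zero]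

/-- The vertex space `V'_i = ⊕_{j ≡ i mod ℓ} V_j` of `A_μ`. -/
noncomputable def Vmod (ℓ : ℕ) (μ : YoungDiagram) (i : ZMod ℓ) : Submodule ℂ (V μ) where
  carrier := {f | ∀ c : ↥μ.cells, res ℓ (c : ℕ × ℕ) ≠ i → f c = 0}
  add_mem' := fun {f g} hf hg c hc => by
    simp only [Pi.add_apply, hf c hc, hg c hc, add_zero]
  zero_mem' := fun c _ => rfl
  smul_mem' := fun a {f} hf c hc => by
    simp only [Pi.smul_apply, hf c hc, smul_zero]

noncomputable section

lemma matMap_apply (μ : YoungDiagram) (K : ℕ × ℕ → ℕ × ℕ → ℂ) (f : V μ) (c' : ↥μ.cells) :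
    matMap μ K f c' = ∑ c : ↥μ.cells, K c c' * f c := rfl

lemma theta_res_zero (ℓ : ℕ) (J : Set (ZMod ℓ)) (θ : ZMod ℓ → ℂ)
    (hst : JStandard ℓ J θ) {i : ZMod ℓ} (hi : i ∈ J) : θ i = 0 := by
  have hw : sPerm ℓ i ∈ Wgrp ℓ := Subgroup.subset_closure ⟨i, rfl⟩
  have hwj : sPerm ℓ i ∈ WJ ℓ J := Subgroup.subset_closure ⟨i, hi, rfl⟩
  have h := (hst _ hw).mpr hwj
  have h2 := congrFun h i
  simp only [sPerm, Equiv.coe_fn_mk, sC, if_pos rfl, if_true] at h2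
  linear_combination (-1/2 : ℂ) * h2

lemma Ssum_single (ℓ : ℕ) (θ : ZMod ℓ → ℂ) (a : ℤ) : Ssum ℓ θ a a = θZ ℓ θ a := by
  simp [Ssum]

lemma Ssum_top (ℓ : ℕ) (θ : ZMod ℓ → ℂ) {a b : ℤ} (h : a ≤ b) :
    Ssum ℓ θ a b = Ssum ℓ θ a (b - 1) + θZ ℓ θ b := by
  unfold Ssum
  have he : Finset.Icc a b = insert b (Finset.Icc a (b - 1)) := by
    ext x; simp only [Finset.mem_Icc, Finset.mem_insert]; omega
  rw [he, Finset.sum_insert (by simp only [Finset.mem_Icc]; omega)]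
  ring

lemma Ssum_bot (ℓ : ℕ) (θ : ZMod ℓ → ℂ) {a b : ℤ} (h : a ≤ b) :
    Ssum ℓ θ a b = θZ ℓ θ a + Ssum ℓ θ (a + 1) b := by
  unfold Ssum
  have he : Finset.Icc a b = insert a (Finset.Icc (a + 1) b) := by
    ext x; simp only [Finset.mem_Icc, Finset.mem_insert]; omega
  rw [he, Finset.sum_insert (by simp only [Finset.mem_Icc]; omega)]

lemma rowLen_eq {ν : YoungDiagram} {r n : ℕ} (h : ∀ j, (r, j) ∈ ν ↔ j < n) :
    ν.rowLen r = n := by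
  have hA : ¬ n < ν.rowLen r := fun hh =>
    lt_irrefl n ((h n).mp (YoungDiagram.mem_iff_lt_rowLen.mpr hh))
  have hB : ¬ ν.rowLen r < n := fun hh =>
    lt_irrefl _ (YoungDiagram.mem_iff_lt_rowLen.mp ((h _).mpr hh))
  omega

lemma colLen_eq {ν : YoungDiagram} {s n : ℕ} (h : ∀ i, (i, s) ∈ ν ↔ i < n) :
    ν.colLen s = n := by
  have hA : ¬ n < ν.colLen s := fun hh =>
    lt_irrefl n ((h n).mp (YoungDiagram.mem_iff_lt_colLen.mpr hh))
  have hB : ¬ ν.colLen s < n := fun hh =>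
    lt_irrefl _ (YoungDiagram.mem_iff_lt_colLen.mp ((h _).mpr hh))
  omega

/-- extension by zero / restriction between the spaces `V ν₁ → V ν₂` (plain function). -/
def ext0fun (ν₁ ν₂ : YoungDiagram) (f : V ν₁) : V ν₂ :=
  fun c => if h : (c : ℕ × ℕ) ∈ ν₁.cells then f ⟨_, h⟩ else 0

/-- extension by zero / restriction as a linear map. -/
def ext0 (ν₁ ν₂ : YoungDiagram) : V ν₁ →ₗ[ℂ] V ν₂ where
  toFun := ext0fun ν₁ ν₂
  map_add' f g := by
    funext c
    simp only [ext0fun, Pi.add_apply]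
    by_cases h : (c : ℕ × ℕ) ∈ ν₁.cells
    · rw [dif_pos h, dif_pos h, dif_pos h]
    · rw [dif_neg h, dif_neg h, dif_neg h, add_zero]
  map_smul' a f := by
    funext c
    simp only [ext0fun, Pi.smul_apply, RingHom.id_apply, smul_eq_mul]
    by_cases h : (c : ℕ × ℕ) ∈ ν₁.cells
    · rw [dif_pos h, dif_pos h]
    · rw [dif_neg h, dif_neg h, mul_zero]

lemma ext0_coe (ν₁ ν₂ : YoungDiagram) : ⇑(ext0 ν₁ ν₂) = ext0fun ν₁ ν₂ := rfl

/-- extension of `f : V ν` to all of `ℕ×ℕ` by zero. -/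
def E (ν : YoungDiagram) (f : V ν) : ℕ × ℕ → ℂ :=
  fun a => if h : a ∈ ν.cells then f ⟨a, h⟩ else 0

lemma sum_E (ν : YoungDiagram) (g : ℕ × ℕ → ℂ) (f : V ν) :
    ∑ a : ↥ν.cells, g ↑a * f a = ∑ a ∈ ν.cells, g a * E ν f a := by
  rw [← Finset.sum_coe_sort ν.cells (fun a => g a * E ν f a)]
  exact Finset.sum_congr rfl fun a _ => by
    simp only [E]; rw [dif_pos a.2]

lemma E_ext0 (ν₁ ν₂ : YoungDiagram) (hsub : ν₁.cells ⊆ ν₂.cells) (f : V ν₁) (a : ℕ × ℕ) :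
    E ν₂ (ext0 ν₁ ν₂ f) a = E ν₁ f a := by
  rw [ext0_coe]
  unfold E ext0fun
  by_cases h1 : a ∈ ν₁.cells
  · rw [dif_pos (hsub h1), dif_pos h1]
  · rw [dif_neg h1]
    by_cases h2 : a ∈ ν₂.cells
    · rw [dif_pos h2, dif_neg h1]
    · rw [dif_neg h2]

lemma mem_Vmod {ℓ : ℕ} {ν : YoungDiagram} {i : ZMod ℓ} {f : V ν} :
    f ∈ Vmod ℓ ν i ↔ ∀ c : ↥ν.cells, res ℓ (c : ℕ × ℕ) ≠ i → f c = 0 := Iff.rfl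

lemma matMap_apply'' (μ : YoungDiagram) (K : ℕ × ℕ → ℕ × ℕ → ℂ) (f : V μ) (c : ↥μ.cells) :
    matMap μ K f c = ∑ a ∈ μ.cells, K a ↑c * E μ f a := by
  rw [matMap_apply]; exact sum_E μ (fun a => K a ↑c) f

lemma Xmap_apply (μ : YoungDiagram) (f : V μ) (c : ↥μ.cells) :
    Xmap μ f c = ∑ a ∈ μ.cells, cX a ↑c * E μ f a := matMap_apply'' μ cX f c

lemma Xmap_applym (μ : YoungDiagram) (f : V μ) (c : ℕ × ℕ) (hc : c ∈ μ.cells) :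
    Xmap μ f ⟨c, hc⟩ = ∑ a ∈ μ.cells, cX a c * E μ f a := matMap_apply'' μ cX f ⟨c, hc⟩

lemma Ymap_apply (ℓ : ℕ) (θ : ZMod ℓ → ℂ) (μ : YoungDiagram) (f : V μ) (c : ↥μ.cells) :
    Ymap ℓ θ μ f c = ∑ a ∈ μ.cells, cY ℓ θ μ a ↑c * E μ f a := matMap_apply'' μ _ f c

lemma Ymap_applym (ℓ : ℕ) (θ : ZMod ℓ → ℂ) (μ : YoungDiagram) (f : V μ) (c : ℕ × ℕ)
    (hc : c ∈ μ.cells) :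
    Ymap ℓ θ μ f ⟨c, hc⟩ = ∑ a ∈ μ.cells, cY ℓ θ μ a c * E μ f a := matMap_apply'' μ _ f _

lemma ymap_apply (ν : YoungDiagram) (f : V ν) :
    ymap ν f = ∑ a ∈ ν.cells, (if rsd a = 0 then E ν f a else 0) := by
  show (∑ c : ↥ν.cells, if rsd (c : ℕ × ℕ) = 0 then f c else 0) = _
  rw [← Finset.sum_coe_sort ν.cells (fun a => if rsd a = 0 then E ν f a else 0)]
  refine Finset.sum_congr rfl fun a _ => ?_
  by_cases h : rsd (a : ℕ × ℕ) = 0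
  · rw [if_pos h, if_pos h]; unfold E; rw [dif_pos a.2]
  · rw [if_neg h, if_neg h]

lemma xmap_apply (ℓ : ℕ) (θ : ZMod ℓ → ℂ) (ν : YoungDiagram) (z : ℂ) (c : ↥ν.cells) :
    xmap ℓ θ ν z c = if rsd (c : ℕ × ℕ) = 0 then -(beta ℓ θ ν (hk (c : ℕ × ℕ))) * z else 0 := rfl

lemma xmap_applym (ℓ : ℕ) (θ : ZMod ℓ → ℂ) (ν : YoungDiagram) (z : ℂ) (c : ℕ × ℕ)
    (hc : c ∈ ν.cells) :
    xmap ℓ θ ν z ⟨c, hc⟩ = if rsd c = 0 then -(beta ℓ θ ν (hk c)) * z else 0 := rfl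

/-- evaluation at a cell as a linear map -/
def evc (ν : YoungDiagram) (c : ↥ν.cells) : V ν →ₗ[ℂ] ℂ := LinearMap.proj c

lemma evc_apply (ν : YoungDiagram) (c : ↥ν.cells) (f : V ν) : evc ν c f = f c := rfl

set_option maxHeartbeats 2000000 in
lemma armCase (ℓ : ℕ) [NeZero ℓ] (θ : ZMod ℓ → ℂ) (μ μ' : YoungDiagram) (b : ℕ × ℕ)
    (hθ0 : θ (res ℓ b) = 0) (hbμc : b ∈ μ.cells)
    (hμ' : μ'.cells = μ.cells.erase b) (hble0 : b.1 ≤ b.2) :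
    ∃ T : Submodule ℂ (V μ),
      (∀ v ∈ T, Xmap μ v ∈ T ∧ Ymap ℓ θ μ v ∈ T) ∧
      (∀ z : ℂ, xmap ℓ θ μ z ∈ T) ∧
      Module.finrank ℂ (V μ ⧸ T) = 1 ∧
      (∀ i : ZMod ℓ, i ≠ res ℓ b → Vmod ℓ μ i ≤ T) ∧
      (∀ v : V μ, Xmap μ v ∈ T) ∧ (∀ v : V μ, Ymap ℓ θ μ v ∈ T) ∧
      ∃ (c : ℂˣ) (ι : V μ' →ₗ[ℂ] V μ),
        Function.Injective ι ∧ LinearMap.range ι = T ∧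
        (∀ i : ZMod ℓ, (Vmod ℓ μ' i).map ι = Vmod ℓ μ i ⊓ T) ∧
        ι ∘ₗ Xmap μ' = Xmap μ ∘ₗ ι ∧
        ι ∘ₗ Ymap ℓ θ μ' = Ymap ℓ θ μ ∘ₗ ι ∧
        ι ∘ₗ xmap ℓ θ μ' = (c : ℂ) • xmap ℓ θ μ ∧
        ymap μ ∘ₗ ι = (c : ℂ) • ymap μ' := by
  obtain ⟨b1, b2⟩ := b
  replace hble0 : b1 ≤ b2 := hble0
  have hθZ : θZ ℓ θ ((b2 : ℤ) - (b1 : ℤ)) = 0 := hθ0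
  have hbμ : (b1, b2) ∈ μ := (YoungDiagram.mem_cells _).mp hbμc
  have hsub : μ'.cells ⊆ μ.cells := by rw [hμ']; exact Finset.erase_subset _ _
  have hbnot : ((b1, b2) : ℕ × ℕ) ∉ μ'.cells := by
    rw [hμ']; exact Finset.notMem_erase _ _
  have hins : μ.cells = insert ((b1, b2) : ℕ × ℕ) μ'.cells := by
    rw [hμ']; exact (Finset.insert_erase hbμc).symm
  have hmem : ∀ c : ℕ × ℕ, c ∈ μ'.cells ↔ c ∈ μ ∧ c ≠ (b1, b2) := by
    intro c; rw [hμ', Finset.mem_erase, YoungDiagram.mem_cells]; tauto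
  have hmem' : ∀ c : ℕ × ℕ, c ∈ μ' ↔ c ∈ μ ∧ c ≠ (b1, b2) := by
    intro c; rw [← YoungDiagram.mem_cells]; exact hmem c
  have hbr : ((b1, b2 + 1) : ℕ × ℕ) ∉ μ := by
    intro h
    have h1 : ((b1, b2 + 1) : ℕ × ℕ) ∈ μ' := (hmem' _).mpr ⟨h, by simp⟩
    have h2 : ((b1, b2) : ℕ × ℕ) ∈ μ' := μ'.up_left_mem le_rfl (Nat.le_succ _) h1
    exact ((hmem' _).mp h2).2 rfl
  have hbc : ((b1 + 1, b2) : ℕ × ℕ) ∉ μ := by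
    intro h
    have h1 : ((b1 + 1, b2) : ℕ × ℕ) ∈ μ' := (hmem' _).mpr ⟨h, by simp⟩
    have h2 : ((b1, b2) : ℕ × ℕ) ∈ μ' := μ'.up_left_mem (Nat.le_succ _) le_rfl h1
    exact ((hmem' _).mp h2).2 rfl
  have hrowIff : ∀ j, (b1, j) ∈ μ ↔ j < b2 + 1 := by
    intro j
    constructor
    · intro hj; by_contra hlt
      exact hbr (μ.up_left_mem le_rfl (by omega) hj)
    · intro hj; exact μ.up_left_mem le_rfl (by omega) hbμ
  have hrow := rowLen_eq hrowIff
  have hcolIff : ∀ i, (i, b2) ∈ μ ↔ i < b1 + 1 := by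
    intro i
    constructor
    · intro hi; by_contra hlt
      exact hbc (μ.up_left_mem (by omega) le_rfl hi)
    · intro hi; exact μ.up_left_mem (by omega) le_rfl hbμ
  have hcol := colLen_eq hcolIff
  have hrowIff' : ∀ j, (b1, j) ∈ μ' ↔ j < b2 := by
    intro j
    rw [hmem' (b1, j)]
    constructor
    · rintro ⟨hj, hne⟩
      have h1 := (hrowIff j).mp hj
      have h2 : j ≠ b2 := fun hh => hne (by rw [hh])
      omega
    · intro hj
      exact ⟨(hrowIff j).mpr (by omega), fun hh => by
        simp only [Prod.mk.injEq] at hh; omega⟩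
  have hrow' := rowLen_eq hrowIff'
  have hrowo : ∀ r, r ≠ b1 → μ'.rowLen r = μ.rowLen r := by
    intro r hr
    refine rowLen_eq fun j => ?_
    rw [hmem' (r, j), YoungDiagram.mem_iff_lt_rowLen]
    constructor
    · exact fun h => h.1
    · exact fun h => ⟨h, fun hh => by simp only [Prod.mk.injEq] at hh; exact hr hh.1⟩
  have hcolo : ∀ s, s ≠ b2 → μ'.colLen s = μ.colLen s := by
    intro s hs
    refine colLen_eq fun i => ?_
    rw [hmem' (i, s), YoungDiagram.mem_iff_lt_colLen]
    constructor
    · exact fun h => h.1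
    · exact fun h => ⟨h, fun hh => by simp only [Prod.mk.injEq] at hh; exact hs hh.2⟩
  have hdiagb : ((b1, b1) : ℕ × ℕ) ∈ μ := μ.up_left_mem le_rfl hble0 hbμ
  have hcolb1pos : b1 < μ.colLen b1 := YoungDiagram.mem_iff_lt_colLen.mp hdiagb
  -- β_{hk b}(μ) vanishes when b is a diagonal box
  have hbeta0 : b2 = b1 → beta ℓ θ μ (hk (b1, b2)) = 0 := by
    intro hb21
    subst hb21
    have hkd : hk (b2, b2) = b2 := by unfold hk; exact min_self b2
    rw [hkd]
    unfold beta arm leg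
    rw [hrow, hcol]
    rw [show ((↑(b2 + 1) : ℤ) - ↑b2 - 1) = 0 by push_cast; ring]
    rw [neg_zero, Ssum_single]
    rw [show (0 : ℤ) = (b2 : ℤ) - (b2 : ℤ) by ring]
    exact hθZ
  -- β is unchanged by removing the box b
  have beta_eq : ∀ c : ℕ × ℕ, c ∈ μ'.cells → beta ℓ θ μ' (hk c) = beta ℓ θ μ (hk c) := by
    intro c hc
    obtain ⟨hcμ, hcne⟩ := (hmem c).mp hc
    have htc1 : hk c ≤ c.1 := min_le_left _ _
    have htc2 : hk c ≤ c.2 := min_le_right _ _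
    have hdiag : ((hk c, hk c) : ℕ × ℕ) ∈ μ := μ.up_left_mem htc1 htc2 hcμ
    have htne2 : hk c ≠ b2 := by
      intro h
      rcases Nat.lt_or_ge b1 b2 with hlt | hge
      · exact hbc (μ.up_left_mem (by omega) (by omega) hdiag)
      · have hb12 : b1 = b2 := le_antisymm hble0 hge
        have hne : c.1 ≠ b1 ∨ c.2 ≠ b2 := by
          by_contra hcon
          push_neg at hcon
          exact hcne (Prod.ext hcon.1 hcon.2)
        rcases hne with h1 | h2
        · exact hbc (μ.up_left_mem (by omega) (by omega) hcμ)
        · exact hbr (μ.up_left_mem (by omega) (by omega) hcμ)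
    have hL : (0 : ℤ) ≤ (μ.colLen (hk c) : ℤ) - (hk c : ℤ) - 1 := by
      have := YoungDiagram.mem_iff_lt_colLen.mp hdiag
      omega
    by_cases htb : hk c = b1
    · rw [htb]
      have hL' : (0 : ℤ) ≤ (μ.colLen b1 : ℤ) - (b1 : ℤ) - 1 := by rw [← htb]; exact hL
      unfold beta arm leg
      rw [hrow', hrow, hcolo b1 (htb ▸ htne2)]
      rw [show ((↑(b2 + 1) : ℤ) - ↑b1 - 1) = (b2 : ℤ) - ↑b1 by push_cast; ring]
      conv_rhs => rw [Ssum_top ℓ θ (show -((μ.colLen b1 : ℤ) - ↑b1 - 1) ≤ (b2 : ℤ) - ↑b1 by omega)]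
      rw [hθZ, add_zero]
    · unfold beta arm leg
      rw [hrowo _ htb, hcolo _ htne2]
  -- the X-coefficients into b all vanish
  have hX0 : ∀ c : ℕ × ℕ, c ∈ μ → cX c (b1, b2) = 0 := by
    intro c hc
    unfold cX
    rw [if_neg]
    rintro ⟨h1, h2⟩
    unfold hk at h1
    unfold rsd at h2
    dsimp only at h1 h2
    have hc1 : c.1 = b1 := by omega
    have hc2 : c.2 = b2 + 1 := by omega
    exact hbr (by rw [show ((b1, b2 + 1) : ℕ × ℕ) = c from Prod.ext hc1.symm hc2.symm]; exact hc)
  -- the Y-coefficients into b all vanish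
  have hY0 : ∀ c : ℕ × ℕ, c ∈ μ → cY ℓ θ μ c (b1, b2) = 0 := by
    intro c hc
    unfold cY
    split_ifs with h1 h2 h3 h4 h5 h6 <;> try rfl
    · -- rsd c < 0, hk b = hk c : impossible
      exfalso
      unfold rsd at h1 h2
      unfold hk at h3
      dsimp only at h1 h2 h3
      have hc1 : c.1 = b1 + 1 := by omega
      have hc2 : c.2 = b2 := by omega
      exact hbc (by rw [show ((b1 + 1, b2) : ℕ × ℕ) = c from Prod.ext hc1.symm hc2.symm]; exact hc)
    · -- rsd c < 0, hk c < hk b : then b diagonal, β = 0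
      unfold rsd at h1 h2
      dsimp only at h1 h2
      exact hbeta0 (by omega)
    · -- rsd c ≥ 0, hk b = hk c
      have hkc : hk c = b1 := by unfold hk at h5 ⊢; dsimp only at h5; omega
      rw [hkc]
      unfold arm
      rw [hrow]
      rw [show ((↑(b2 + 1) : ℤ) - ↑b1 - 1) = (b2 : ℤ) - ↑b1 by push_cast; ring]
      rw [show (rsd c + 1 : ℤ) = (b2 : ℤ) - ↑b1 by
        unfold rsd at h1 ⊢; dsimp only at h1; omega]
      rw [Ssum_single, hθZ, neg_zero]
    · -- rsd c ≥ 0, hk b < hk c : impossible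
      exfalso
      unfold rsd at h1 h2
      unfold hk at h6
      dsimp only at h1 h2 h6
      exact hbc (μ.up_left_mem (by omega) (by omega) hc)
  -- the Y-coefficients agree on μ'
  have hYeq : ∀ a c : ℕ × ℕ, a ∈ μ'.cells → c ∈ μ'.cells →
      cY ℓ θ μ' a c = cY ℓ θ μ a c := by
    intro a c ha hc
    obtain ⟨haμ, hane⟩ := (hmem a).mp ha
    unfold cY
    split_ifs with h1 h2 h3 h4 h5 h6 <;> try rfl
    · -- rsd a < 0, hk c = hk a : leg coefficient
      have hne : hk a ≠ b2 := by
        intro h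
        unfold hk at h
        unfold rsd at h2
        refine hbc (μ.up_left_mem (by omega) (by omega) haμ)
      unfold leg
      rw [hcolo _ hne]
    · -- rsd a < 0, hk a < hk c : β coefficient
      rw [beta_eq c hc]
    · -- rsd a ≥ 0, hk c = hk a : arm coefficient
      by_cases hab : hk a = b1
      · have ha1 : a.1 = b1 := by unfold hk at hab; unfold rsd at h2; omega
        have haμ' : (a.1, a.2) ∈ μ' := (YoungDiagram.mem_cells _).mp ha
        have hlt : a.2 < b2 := by
          have := YoungDiagram.mem_iff_lt_rowLen.mp haμ'
          rw [ha1, hrow'] at this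
          exact this
        rw [hab]
        unfold arm
        rw [hrow', hrow]
        rw [show ((↑(b2 + 1) : ℤ) - ↑b1 - 1) = (b2 : ℤ) - ↑b1 by push_cast; ring]
        conv_rhs => rw [Ssum_top ℓ θ (show rsd a + 1 ≤ (b2 : ℤ) - ↑b1 by
          unfold rsd; omega)]
        rw [hθZ, add_zero]
      · unfold arm
        rw [hrowo _ hab]
    · -- rsd a ≥ 0, hk c < hk a : β coefficient
      rw [beta_eq c hc]
  -- assembly
  have hbmem : ∀ a : ℕ × ℕ, a ∈ μ.cells → a ∈ μ := fun a ha => (YoungDiagram.mem_cells _).mp ha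
  have hsplit : ∀ g : ℕ × ℕ → ℂ, ∑ a ∈ μ.cells, g a = g (b1, b2) + ∑ a ∈ μ'.cells, g a := by
    intro g
    rw [hins]
    exact Finset.sum_insert hbnot
  have hXT : ∀ v : V μ, Xmap μ v ⟨(b1, b2), hbμc⟩ = 0 := by
    intro v
    rw [Xmap_applym]
    exact Finset.sum_eq_zero fun a ha => by rw [hX0 a (hbmem a ha), zero_mul]
  have hYT : ∀ v : V μ, Ymap ℓ θ μ v ⟨(b1, b2), hbμc⟩ = 0 := by
    intro v
    rw [Ymap_applym]
    exact Finset.sum_eq_zero fun a ha => by rw [hY0 a (hbmem a ha), zero_mul]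
  have hxT : ∀ z : ℂ, xmap ℓ θ μ z ⟨(b1, b2), hbμc⟩ = 0 := by
    intro z
    rw [xmap_applym]
    by_cases h : rsd ((b1, b2) : ℕ × ℕ) = 0
    · rw [if_pos h, hbeta0 (by unfold rsd at h; dsimp only at h; omega)]
      ring
    · rw [if_neg h]
  have hcoe : ∀ c : ↥μ.cells, (c : ℕ × ℕ) ∉ μ'.cells → (c : ℕ × ℕ) = (b1, b2) := by
    intro c hcn
    have h2 : (c : ℕ × ℕ) ∈ insert ((b1, b2) : ℕ × ℕ) μ'.cells := by
      rw [← hins]; exact c.2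
    rcases Finset.mem_insert.mp h2 with h | h
    · exact h
    · exact absurd h hcn
  have hfin : Module.finrank ℂ
      (V μ ⧸ LinearMap.ker (evc μ ⟨(b1, b2), hbμc⟩)) = 1 := by
    have hsurjev : Function.Surjective (evc μ ⟨(b1, b2), hbμc⟩) := by
      intro z
      refine ⟨Pi.single (⟨(b1, b2), hbμc⟩ : ↥μ.cells) z, ?_⟩
      exact Pi.single_eq_same _ _
    rw [(LinearMap.quotKerEquivOfSurjective _ hsurjev).finrank_eq, Module.finrank_self]
  have hinj : Function.Injective (ext0 μ' μ) := by
    intro f g hfg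
    funext c
    have h := congrFun hfg (⟨(c : ℕ × ℕ), hsub c.2⟩ : ↥μ.cells)
    rw [ext0_coe] at h
    unfold ext0fun at h
    dsimp only at h
    rw [dif_pos c.2, dif_pos c.2] at h
    exact h
  have hrange : LinearMap.range (ext0 μ' μ) =
      LinearMap.ker (evc μ ⟨(b1, b2), hbμc⟩) := by
    apply le_antisymm
    · intro g hg
      obtain ⟨f, rfl⟩ := LinearMap.mem_range.mp hg
      refine LinearMap.mem_ker.mpr ?_
      show ext0fun μ' μ f ⟨(b1, b2), hbμc⟩ = 0
      unfold ext0fun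
      rw [dif_neg hbnot]
    · intro g hg
      refine LinearMap.mem_range.mpr ⟨fun c' => g ⟨(c' : ℕ × ℕ), hsub c'.2⟩, ?_⟩
      funext c
      show ext0fun μ' μ (fun c' => g ⟨(c' : ℕ × ℕ), hsub c'.2⟩) c = g c
      unfold ext0fun
      by_cases h : (c : ℕ × ℕ) ∈ μ'.cells
      · rw [dif_pos h]
      · rw [dif_neg h]
        have hcb : c = (⟨(b1, b2), hbμc⟩ : ↥μ.cells) := Subtype.ext (hcoe c h)
        rw [hcb]
        exact (LinearMap.mem_ker.mp hg).symm
  have hvmod : ∀ i : ZMod ℓ, (Vmod ℓ μ' i).map (ext0 μ' μ) =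
      Vmod ℓ μ i ⊓ LinearMap.ker (evc μ ⟨(b1, b2), hbμc⟩) := by
    intro i
    apply le_antisymm
    · intro g hg
      obtain ⟨f, hf, rfl⟩ := Submodule.mem_map.mp hg
      refine Submodule.mem_inf.mpr ⟨?_, ?_⟩
      · intro c hcres
        show ext0fun μ' μ f c = 0
        unfold ext0fun
        by_cases h : (c : ℕ × ℕ) ∈ μ'.cells
        · rw [dif_pos h]
          exact (mem_Vmod.mp hf) ⟨(c : ℕ × ℕ), h⟩ hcres
        · rw [dif_neg h]
      · refine LinearMap.mem_ker.mpr ?_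
        show ext0fun μ' μ f ⟨(b1, b2), hbμc⟩ = 0
        unfold ext0fun
        rw [dif_neg hbnot]
    · intro g hgm
      obtain ⟨hg1, hg2⟩ := Submodule.mem_inf.mp hgm
      refine Submodule.mem_map.mpr ⟨fun c' => g ⟨(c' : ℕ × ℕ), hsub c'.2⟩, ?_, ?_⟩
      · intro c' hc'
        exact (mem_Vmod.mp hg1) _ hc'
      · funext c
        show ext0fun μ' μ (fun c' => g ⟨(c' : ℕ × ℕ), hsub c'.2⟩) c = g c
        unfold ext0fun
        by_cases h : (c : ℕ × ℕ) ∈ μ'.cells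
        · rw [dif_pos h]
        · rw [dif_neg h]
          have hcb : c = (⟨(b1, b2), hbμc⟩ : ↥μ.cells) := Subtype.ext (hcoe c h)
          rw [hcb]
          exact (LinearMap.mem_ker.mp hg2).symm
  have hXcomm : ext0 μ' μ ∘ₗ Xmap μ' = Xmap μ ∘ₗ ext0 μ' μ := by
    refine LinearMap.ext fun f => funext fun c => ?_
    simp only [LinearMap.comp_apply]
    rw [Xmap_apply μ (ext0 μ' μ f) c]
    have hEe : ∀ a ∈ μ.cells, cX a ↑c * E μ (ext0 μ' μ f) a = cX a ↑c * E μ' f a :=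
      fun a _ => by rw [E_ext0 μ' μ hsub f a]
    rw [Finset.sum_congr rfl hEe]
    rw [hsplit (fun a => cX a ↑c * E μ' f a)]
    rw [show E μ' f (b1, b2) = 0 from dif_neg hbnot, mul_zero, zero_add]
    show ext0fun μ' μ (Xmap μ' f) c = _
    unfold ext0fun
    by_cases h : (c : ℕ × ℕ) ∈ μ'.cells
    · rw [dif_pos h, Xmap_applym μ' f ↑c h]
    · rw [dif_neg h]
      rw [hcoe c h]
      exact (Finset.sum_eq_zero fun a ha => by
        rw [hX0 a (hbmem a (hsub ha)), zero_mul]).symm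
  have hYcomm : ext0 μ' μ ∘ₗ Ymap ℓ θ μ' = Ymap ℓ θ μ ∘ₗ ext0 μ' μ := by
    refine LinearMap.ext fun f => funext fun c => ?_
    simp only [LinearMap.comp_apply]
    rw [Ymap_apply ℓ θ μ (ext0 μ' μ f) c]
    have hEe : ∀ a ∈ μ.cells, cY ℓ θ μ a ↑c * E μ (ext0 μ' μ f) a
        = cY ℓ θ μ a ↑c * E μ' f a := fun a _ => by rw [E_ext0 μ' μ hsub f a]
    rw [Finset.sum_congr rfl hEe]
    rw [hsplit (fun a => cY ℓ θ μ a ↑c * E μ' f a)]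
    rw [show E μ' f (b1, b2) = 0 from dif_neg hbnot, mul_zero, zero_add]
    show ext0fun μ' μ (Ymap ℓ θ μ' f) c = _
    unfold ext0fun
    by_cases h : (c : ℕ × ℕ) ∈ μ'.cells
    · rw [dif_pos h, Ymap_applym ℓ θ μ' f ↑c h]
      exact Finset.sum_congr rfl fun a ha => by rw [hYeq a ↑c ha h]
    · rw [dif_neg h]
      rw [hcoe c h]
      exact (Finset.sum_eq_zero fun a ha => by
        rw [hY0 a (hbmem a (hsub ha)), zero_mul]).symm
  have hxcomm : ext0 μ' μ ∘ₗ xmap ℓ θ μ' = ((1 : ℂˣ) : ℂ) • xmap ℓ θ μ := by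
    refine LinearMap.ext fun z => funext fun c => ?_
    simp only [LinearMap.comp_apply, LinearMap.smul_apply, Pi.smul_apply, Units.val_one,
      one_smul]
    rw [xmap_apply ℓ θ μ z c]
    show ext0fun μ' μ (xmap ℓ θ μ' z) c = _
    unfold ext0fun
    by_cases h : (c : ℕ × ℕ) ∈ μ'.cells
    · rw [dif_pos h, xmap_applym ℓ θ μ' z ↑c h]
      by_cases hr : rsd (c : ℕ × ℕ) = 0
      · rw [if_pos hr, if_pos hr, beta_eq ↑c h]
      · rw [if_neg hr, if_neg hr]
    · rw [dif_neg h]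
      rw [hcoe c h]
      by_cases hr : rsd ((b1, b2) : ℕ × ℕ) = 0
      · rw [if_pos hr, hbeta0 (by unfold rsd at hr; dsimp only at hr; omega)]
        ring
      · rw [if_neg hr]
  have hycomm : ymap μ ∘ₗ ext0 μ' μ = ((1 : ℂˣ) : ℂ) • ymap μ' := by
    refine LinearMap.ext fun f => ?_
    simp only [LinearMap.comp_apply, LinearMap.smul_apply, smul_eq_mul, Units.val_one, one_mul]
    rw [ymap_apply μ (ext0 μ' μ f), ymap_apply μ' f]
    have hEe : ∀ a ∈ μ.cells, (if rsd a = 0 then E μ (ext0 μ' μ f) a else 0)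
        = (if rsd a = 0 then E μ' f a else 0) := fun a _ => by rw [E_ext0 μ' μ hsub f a]
    rw [Finset.sum_congr rfl hEe]
    rw [hsplit (fun a => if rsd a = 0 then E μ' f a else 0)]
    rw [show E μ' f (b1, b2) = 0 from dif_neg hbnot, ite_self, zero_add]
  exact ⟨LinearMap.ker (evc μ ⟨(b1, b2), hbμc⟩),
    fun v _ => ⟨LinearMap.mem_ker.mpr (hXT v), LinearMap.mem_ker.mpr (hYT v)⟩,
    fun z => LinearMap.mem_ker.mpr (hxT z),
    hfin,
    fun i hi f hf => LinearMap.mem_ker.mpr ((mem_Vmod.mp hf) ⟨(b1, b2), hbμc⟩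
      (fun hh => hi hh.symm)),
    fun v => LinearMap.mem_ker.mpr (hXT v),
    fun v => LinearMap.mem_ker.mpr (hYT v),
    1, ext0 μ' μ, hinj, hrange, hvmod, hXcomm, hYcomm, hxcomm, hycomm⟩

set_option maxHeartbeats 2000000 in
lemma legCase (ℓ : ℕ) [NeZero ℓ] (θ : ZMod ℓ → ℂ) (μ μ' : YoungDiagram) (b : ℕ × ℕ)
    (hθ0 : θ (res ℓ b) = 0) (hbμc : b ∈ μ.cells)
    (hμ' : μ'.cells = μ.cells.erase b) (hble0 : b.2 < b.1) :
    ∃ S : Submodule ℂ (V μ), S ≤ Vmod ℓ μ (res ℓ b) ∧ Module.finrank ℂ ↥S = 1 ∧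
      (∀ v ∈ S, Xmap μ v = 0 ∧ Ymap ℓ θ μ v = 0 ∧ ymap μ v = 0) ∧
      ∃ (c : ℂˣ) (π : V μ →ₗ[ℂ] V μ'),
        Function.Surjective π ∧ LinearMap.ker π = S ∧
        (∀ i : ZMod ℓ, (Vmod ℓ μ i).map π = Vmod ℓ μ' i) ∧
        π ∘ₗ Xmap μ = Xmap μ' ∘ₗ π ∧
        π ∘ₗ Ymap ℓ θ μ = Ymap ℓ θ μ' ∘ₗ π ∧
        π ∘ₗ xmap ℓ θ μ = (c : ℂ) • xmap ℓ θ μ' ∧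
        ymap μ' ∘ₗ π = (c : ℂ) • ymap μ := by
  obtain ⟨b1, b2⟩ := b
  replace hble0 : b2 < b1 := hble0
  have hθZ : θZ ℓ θ ((b2 : ℤ) - (b1 : ℤ)) = 0 := hθ0
  have hbμ : (b1, b2) ∈ μ := (YoungDiagram.mem_cells _).mp hbμc
  have hsub : μ'.cells ⊆ μ.cells := by rw [hμ']; exact Finset.erase_subset _ _
  have hbnot : ((b1, b2) : ℕ × ℕ) ∉ μ'.cells := by
    rw [hμ']; exact Finset.notMem_erase _ _
  have hins : μ.cells = insert ((b1, b2) : ℕ × ℕ) μ'.cells := by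
    rw [hμ']; exact (Finset.insert_erase hbμc).symm
  have hmem : ∀ c : ℕ × ℕ, c ∈ μ'.cells ↔ c ∈ μ ∧ c ≠ (b1, b2) := by
    intro c; rw [hμ', Finset.mem_erase, YoungDiagram.mem_cells]; tauto
  have hmem' : ∀ c : ℕ × ℕ, c ∈ μ' ↔ c ∈ μ ∧ c ≠ (b1, b2) := by
    intro c; rw [← YoungDiagram.mem_cells]; exact hmem c
  have hbr : ((b1, b2 + 1) : ℕ × ℕ) ∉ μ := by
    intro h
    have h1 : ((b1, b2 + 1) : ℕ × ℕ) ∈ μ' := (hmem' _).mpr ⟨h, by simp⟩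
    have h2 : ((b1, b2) : ℕ × ℕ) ∈ μ' := μ'.up_left_mem le_rfl (Nat.le_succ _) h1
    exact ((hmem' _).mp h2).2 rfl
  have hbc : ((b1 + 1, b2) : ℕ × ℕ) ∉ μ := by
    intro h
    have h1 : ((b1 + 1, b2) : ℕ × ℕ) ∈ μ' := (hmem' _).mpr ⟨h, by simp⟩
    have h2 : ((b1, b2) : ℕ × ℕ) ∈ μ' := μ'.up_left_mem (Nat.le_succ _) le_rfl h1
    exact ((hmem' _).mp h2).2 rfl
  have hrowIff : ∀ j, (b1, j) ∈ μ ↔ j < b2 + 1 := by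
    intro j
    constructor
    · intro hj; by_contra hlt
      exact hbr (μ.up_left_mem le_rfl (by omega) hj)
    · intro hj; exact μ.up_left_mem le_rfl (by omega) hbμ
  have hrow := rowLen_eq hrowIff
  have hcolIff : ∀ i, (i, b2) ∈ μ ↔ i < b1 + 1 := by
    intro i
    constructor
    · intro hi; by_contra hlt
      exact hbc (μ.up_left_mem (by omega) le_rfl hi)
    · intro hi; exact μ.up_left_mem (by omega) le_rfl hbμ
  have hcol := colLen_eq hcolIff
  have hcolIff' : ∀ i, (i, b2) ∈ μ' ↔ i < b1 := by
    intro i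
    rw [hmem' (i, b2)]
    constructor
    · rintro ⟨hi, hne⟩
      have h1 := (hcolIff i).mp hi
      have h2 : i ≠ b1 := fun hh => hne (by rw [hh])
      omega
    · intro hi
      exact ⟨(hcolIff i).mpr (by omega), fun hh => by
        simp only [Prod.mk.injEq] at hh; omega⟩
  have hcol' := colLen_eq hcolIff'
  have hrowo : ∀ r, r ≠ b1 → μ'.rowLen r = μ.rowLen r := by
    intro r hr
    refine rowLen_eq fun j => ?_
    rw [hmem' (r, j), YoungDiagram.mem_iff_lt_rowLen]
    constructor
    · exact fun h => h.1
    · exact fun h => ⟨h, fun hh => by simp only [Prod.mk.injEq] at hh; exact hr hh.1⟩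
  have hcolo : ∀ s, s ≠ b2 → μ'.colLen s = μ.colLen s := by
    intro s hs
    refine colLen_eq fun i => ?_
    rw [hmem' (i, s), YoungDiagram.mem_iff_lt_colLen]
    constructor
    · exact fun h => h.1
    · exact fun h => ⟨h, fun hh => by simp only [Prod.mk.injEq] at hh; exact hs hh.2⟩
  have hdiagb : ((b2, b2) : ℕ × ℕ) ∈ μ := μ.up_left_mem (by omega) le_rfl hbμ
  have hrowb2pos : b2 < μ.rowLen b2 := YoungDiagram.mem_iff_lt_rowLen.mp hdiagb
  -- β is unchanged by removing the box b
  have beta_eq : ∀ c : ℕ × ℕ, c ∈ μ'.cells → beta ℓ θ μ' (hk c) = beta ℓ θ μ (hk c) := by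
    intro c hc
    obtain ⟨hcμ, hcne⟩ := (hmem c).mp hc
    have htc1 : hk c ≤ c.1 := min_le_left _ _
    have htc2 : hk c ≤ c.2 := min_le_right _ _
    have hdiag : ((hk c, hk c) : ℕ × ℕ) ∈ μ := μ.up_left_mem htc1 htc2 hcμ
    have htne1 : hk c ≠ b1 := by
      intro h
      exact hbr (μ.up_left_mem (by omega) (by omega) hdiag)
    by_cases htb : hk c = b2
    · rw [htb]
      have hA : (0 : ℤ) ≤ (μ.rowLen b2 : ℤ) - (b2 : ℤ) - 1 := by omega
      unfold beta arm leg
      rw [hrowo b2 (by omega), hcol', hcol]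
      rw [show (-((↑(b1 + 1) : ℤ) - ↑b2 - 1)) = (b2 : ℤ) - ↑b1 by push_cast; ring]
      rw [show (-((↑b1 : ℤ) - ↑b2 - 1)) = (b2 : ℤ) - ↑b1 + 1 by ring]
      conv_rhs => rw [Ssum_bot ℓ θ (show (b2 : ℤ) - ↑b1 ≤ (μ.rowLen b2 : ℤ) - ↑b2 - 1 by omega)]
      rw [hθZ, zero_add]
    · unfold beta arm leg
      rw [hrowo _ htne1, hcolo _ htb]
  -- the X-coefficients out of b all vanish
  have hX0 : ∀ c' : ℕ × ℕ, c' ∈ μ → cX (b1, b2) c' = 0 := by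
    intro c' hc'
    unfold cX
    rw [if_neg]
    rintro ⟨h1, h2⟩
    unfold hk at h1
    unfold rsd at h2
    dsimp only at h1 h2
    have hc1 : c'.1 = b1 + 1 := by omega
    have hc2 : c'.2 = b2 := by omega
    exact hbc (by rw [show ((b1 + 1, b2) : ℕ × ℕ) = c' from Prod.ext hc1.symm hc2.symm]; exact hc')
  -- the Y-coefficients out of b all vanish
  have hY0 : ∀ c' : ℕ × ℕ, c' ∈ μ → cY ℓ θ μ (b1, b2) c' = 0 := by
    intro c' hc'
    unfold cY
    split_ifs with h1 h2 h3 h4 h5 h6 <;> try rfl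
    · -- hk c' = hk b : single θ
      have hkb : hk ((b1, b2) : ℕ × ℕ) = b2 := by unfold hk; dsimp only; omega
      rw [hkb]
      unfold leg
      rw [hcol]
      rw [show (-((↑(b1 + 1) : ℤ) - ↑b2 - 1)) = (b2 : ℤ) - ↑b1 by push_cast; ring]
      rw [show rsd ((b1, b2) : ℕ × ℕ) = (b2 : ℤ) - ↑b1 from rfl]
      rw [Ssum_single]
      exact hθZ
    · -- hk b < hk c' : impossible
      exfalso
      unfold rsd at h1 h2
      unfold hk at h4
      dsimp only at h1 h2 h4
      exact hbr (μ.up_left_mem (by omega) (by omega) hc')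
    · exfalso; unfold rsd at h2; dsimp only at h2; omega
    · exfalso; unfold rsd at h2; dsimp only at h2; omega
  -- the Y-coefficients agree on μ'
  have hYeq : ∀ a c : ℕ × ℕ, a ∈ μ'.cells → c ∈ μ'.cells →
      cY ℓ θ μ' a c = cY ℓ θ μ a c := by
    intro a c ha hc
    obtain ⟨haμ, hane⟩ := (hmem a).mp ha
    unfold cY
    split_ifs with h1 h2 h3 h4 h5 h6 <;> try rfl
    · -- rsd a < 0, hk c = hk a : leg coefficient
      by_cases hab : hk a = b2
      · have ha2 : a.2 = b2 := by unfold hk at hab; unfold rsd at h2; omega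
        have haμ' : (a.1, a.2) ∈ μ' := (YoungDiagram.mem_cells _).mp ha
        have ha1 : a.1 < b1 := by
          have hl := YoungDiagram.mem_iff_lt_colLen.mp haμ'
          rw [ha2, hcol'] at hl
          exact hl
        rw [hab]
        unfold leg
        rw [hcol', hcol]
        rw [show (-((↑(b1 + 1) : ℤ) - ↑b2 - 1)) = (b2 : ℤ) - ↑b1 by push_cast; ring]
        rw [show (-((↑b1 : ℤ) - ↑b2 - 1)) = (b2 : ℤ) - ↑b1 + 1 by ring]
        conv_rhs => rw [Ssum_bot ℓ θ (show (b2 : ℤ) - ↑b1 ≤ rsd a by unfold rsd; omega)]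
        rw [hθZ, zero_add]
      · unfold leg
        rw [hcolo _ hab]
    · -- rsd a < 0, hk a < hk c : β coefficient
      rw [beta_eq c hc]
    · -- rsd a ≥ 0, hk c = hk a : arm coefficient
      have hne : hk a ≠ b1 := by
        intro h
        unfold hk at h
        unfold rsd at h2
        refine hbr (μ.up_left_mem (by omega) (by omega) haμ)
      unfold arm
      rw [hrowo _ hne]
    · -- rsd a ≥ 0, hk c < hk a : β coefficient
      rw [beta_eq c hc]
  -- assembly
  have hbmem : ∀ a : ℕ × ℕ, a ∈ μ.cells → a ∈ μ := fun a ha => (YoungDiagram.mem_cells _).mp ha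
  have hsplit : ∀ g : ℕ × ℕ → ℂ, ∑ a ∈ μ.cells, g a = g (b1, b2) + ∑ a ∈ μ'.cells, g a := by
    intro g
    rw [hins]
    exact Finset.sum_insert hbnot
  -- support of kernel elements
  have hvb : ∀ v : V μ, v ∈ LinearMap.ker (ext0 μ μ') →
      ∀ a : ↥μ.cells, (a : ℕ × ℕ) ≠ (b1, b2) → v a = 0 := by
    intro v hv a hane
    have ham' : (a : ℕ × ℕ) ∈ μ'.cells := (hmem _).mpr ⟨hbmem _ a.2, hane⟩
    have h := congrFun (LinearMap.mem_ker.mp hv) (⟨(a : ℕ × ℕ), ham'⟩ : ↥μ'.cells)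
    rw [ext0_coe] at h
    unfold ext0fun at h
    dsimp only at h
    rw [dif_pos a.2] at h
    exact h
  have hEz : ∀ v : V μ, v ∈ LinearMap.ker (ext0 μ μ') →
      ∀ a ∈ μ'.cells, E μ v a = 0 := by
    intro v hv a ha
    unfold E
    rw [dif_pos (hsub ha)]
    exact hvb v hv _ ((hmem a).mp ha).2
  have hEπ : ∀ (f : V μ) (a : ℕ × ℕ), a ∈ μ'.cells → E μ' (ext0 μ μ' f) a = E μ f a := by
    intro f a ha
    unfold E
    rw [dif_pos ha, dif_pos (hsub ha)]
    show ext0fun μ μ' f ⟨a, ha⟩ = f ⟨a, hsub ha⟩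
    unfold ext0fun
    rw [dif_pos (hsub ha)]
  have hrne0 : rsd ((b1, b2) : ℕ × ℕ) ≠ 0 := by unfold rsd; dsimp only; omega
  have hXS : ∀ v ∈ LinearMap.ker (ext0 μ μ'), Xmap μ v = 0 := by
    intro v hv
    funext c
    rw [Xmap_apply μ v c, hsplit (fun a => cX a ↑c * E μ v a)]
    rw [hX0 ↑c (hbmem _ c.2), zero_mul]
    rw [Finset.sum_eq_zero fun a ha => by rw [hEz v hv a ha, mul_zero], add_zero]
    simp
  have hYS : ∀ v ∈ LinearMap.ker (ext0 μ μ'), Ymap ℓ θ μ v = 0 := by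
    intro v hv
    funext c
    rw [Ymap_apply ℓ θ μ v c, hsplit (fun a => cY ℓ θ μ a ↑c * E μ v a)]
    rw [hY0 ↑c (hbmem _ c.2), zero_mul]
    rw [Finset.sum_eq_zero fun a ha => by rw [hEz v hv a ha, mul_zero], add_zero]
    simp
  have hyS : ∀ v ∈ LinearMap.ker (ext0 μ μ'), ymap μ v = 0 := by
    intro v hv
    rw [ymap_apply μ v, hsplit (fun a => if rsd a = 0 then E μ v a else 0)]
    rw [if_neg hrne0, zero_add]
    exact Finset.sum_eq_zero fun a ha => by
      rw [hEz v hv a ha, ite_self]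
  have hSV : LinearMap.ker (ext0 μ μ') ≤ Vmod ℓ μ (res ℓ ((b1, b2) : ℕ × ℕ)) := by
    intro v hv c hcres
    refine hvb v hv c fun hh => hcres ?_
    rw [hh]
  have hsurj : Function.Surjective (ext0 μ μ') := by
    intro f
    refine ⟨ext0 μ' μ f, ?_⟩
    funext c'
    show ext0fun μ μ' (ext0fun μ' μ f) c' = f c'
    unfold ext0fun
    rw [dif_pos (hsub c'.2), dif_pos c'.2]
  have hfin : Module.finrank ℂ ↥(LinearMap.ker (ext0 μ μ')) = 1 := by
    have hsingle : ∀ z : ℂ, (Pi.single (⟨(b1, b2), hbμc⟩ : ↥μ.cells) z : V μ) ∈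
        LinearMap.ker (ext0 μ μ') := by
      intro z
      refine LinearMap.mem_ker.mpr ?_
      funext c'
      show ext0fun μ μ' (Pi.single (⟨(b1, b2), hbμc⟩ : ↥μ.cells) z : V μ) c' = 0
      unfold ext0fun
      rw [dif_pos (hsub c'.2)]
      apply Pi.single_eq_of_ne
      intro hh
      have : (c' : ℕ × ℕ) = (b1, b2) := congrArg Subtype.val hh
      exact ((hmem _).mp c'.2).2 this
    have hbij : Function.Bijective
        ((evc μ ⟨(b1, b2), hbμc⟩).comp (LinearMap.ker (ext0 μ μ')).subtype) := by
      constructor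
      · intro u w huw
        apply Subtype.ext
        funext a
        by_cases hab : (a : ℕ × ℕ) = (b1, b2)
        · have ha : a = (⟨(b1, b2), hbμc⟩ : ↥μ.cells) := Subtype.ext hab
          rw [ha]
          exact huw
        · rw [hvb u.1 u.2 a hab, hvb w.1 w.2 a hab]
      · intro z
        exact ⟨⟨(Pi.single (⟨(b1, b2), hbμc⟩ : ↥μ.cells) z : V μ), hsingle z⟩,
          Pi.single_eq_same _ _⟩
    rw [(LinearEquiv.ofBijective _ hbij).finrank_eq, Module.finrank_self]
  have hvmod : ∀ i : ZMod ℓ, (Vmod ℓ μ i).map (ext0 μ μ') = Vmod ℓ μ' i := by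
    intro i
    apply le_antisymm
    · intro g hg
      obtain ⟨f, hf, rfl⟩ := Submodule.mem_map.mp hg
      intro c' hc'
      show ext0fun μ μ' f c' = 0
      unfold ext0fun
      rw [dif_pos (hsub c'.2)]
      exact (mem_Vmod.mp hf) ⟨(c' : ℕ × ℕ), hsub c'.2⟩ hc'
    · intro g hg
      refine Submodule.mem_map.mpr ⟨ext0 μ' μ g, ?_, ?_⟩
      · intro c hcres
        show ext0fun μ' μ g c = 0
        unfold ext0fun
        by_cases h : (c : ℕ × ℕ) ∈ μ'.cells
        · rw [dif_pos h]
          exact (mem_Vmod.mp hg) ⟨(c : ℕ × ℕ), h⟩ hcres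
        · rw [dif_neg h]
      · funext c'
        show ext0fun μ μ' (ext0fun μ' μ g) c' = g c'
        unfold ext0fun
        rw [dif_pos (hsub c'.2), dif_pos c'.2]
  have hXcomm : ext0 μ μ' ∘ₗ Xmap μ = Xmap μ' ∘ₗ ext0 μ μ' := by
    refine LinearMap.ext fun f => funext fun c' => ?_
    simp only [LinearMap.comp_apply]
    rw [Xmap_apply μ' (ext0 μ μ' f) c']
    show ext0fun μ μ' (Xmap μ f) c' = _
    unfold ext0fun
    rw [dif_pos (hsub c'.2)]
    rw [Xmap_applym μ f ↑c' (hsub c'.2)]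
    rw [hsplit (fun a => cX a ↑c' * E μ f a)]
    rw [hX0 ↑c' (hbmem _ (hsub c'.2)), zero_mul, zero_add]
    exact Finset.sum_congr rfl fun a ha => by rw [hEπ f a ha]
  have hYcomm : ext0 μ μ' ∘ₗ Ymap ℓ θ μ = Ymap ℓ θ μ' ∘ₗ ext0 μ μ' := by
    refine LinearMap.ext fun f => funext fun c' => ?_
    simp only [LinearMap.comp_apply]
    rw [Ymap_apply ℓ θ μ' (ext0 μ μ' f) c']
    show ext0fun μ μ' (Ymap ℓ θ μ f) c' = _
    unfold ext0fun
    rw [dif_pos (hsub c'.2)]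
    rw [Ymap_applym ℓ θ μ f ↑c' (hsub c'.2)]
    rw [hsplit (fun a => cY ℓ θ μ a ↑c' * E μ f a)]
    rw [hY0 ↑c' (hbmem _ (hsub c'.2)), zero_mul, zero_add]
    exact Finset.sum_congr rfl fun a ha => by rw [hYeq a ↑c' ha c'.2, hEπ f a ha]
  have hxcomm : ext0 μ μ' ∘ₗ xmap ℓ θ μ = ((1 : ℂˣ) : ℂ) • xmap ℓ θ μ' := by
    refine LinearMap.ext fun z => funext fun c' => ?_
    simp only [LinearMap.comp_apply, LinearMap.smul_apply, Pi.smul_apply, Units.val_one,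
      one_smul]
    rw [xmap_apply ℓ θ μ' z c']
    show ext0fun μ μ' (xmap ℓ θ μ z) c' = _
    unfold ext0fun
    rw [dif_pos (hsub c'.2)]
    rw [xmap_applym ℓ θ μ z ↑c' (hsub c'.2)]
    by_cases hr : rsd (c' : ℕ × ℕ) = 0
    · rw [if_pos hr, if_pos hr, beta_eq ↑c' c'.2]
    · rw [if_neg hr, if_neg hr]
  have hycomm : ymap μ' ∘ₗ ext0 μ μ' = ((1 : ℂˣ) : ℂ) • ymap μ := by
    refine LinearMap.ext fun f => ?_
    simp only [LinearMap.comp_apply, LinearMap.smul_apply, smul_eq_mul, Units.val_one, one_mul]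
    rw [ymap_apply μ' (ext0 μ μ' f), ymap_apply μ f]
    rw [hsplit (fun a => if rsd a = 0 then E μ f a else 0)]
    rw [if_neg hrne0, zero_add]
    exact Finset.sum_congr rfl fun a ha => by rw [hEπ f a ha]
  exact ⟨LinearMap.ker (ext0 μ μ'), hSV, hfin,
    fun v hv => ⟨hXS v hv, hYS v hv, hyS v hv⟩,
    1, ext0 μ μ', hsurj, rfl, hvmod, hXcomm, hYcomm, hxcomm, hycomm⟩

end

/-- Let `θ` be `J`-standard with `∑ θ_i ≠ 0`, and let `b` be a removable
box of `μ` with `ℓ`-residue `i ∈ J`.  Then either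
(1) `A_μ` has a one-dimensional subrepresentation `S` concentrated at the vertex `i`
(with `S_∞ = 0` and all maps vanishing on `S`) whose quotient is isomorphic to `A_{μ∖b}`
(realized by a surjection `π` with kernel `S` intertwining the structure maps, the framing
up to a nonzero scalar), or
(2) `A_μ` has a framed subrepresentation `T` with `T_∞ = ℂ` isomorphic to `A_{μ∖b}`
(realized by an injection `ι` with image `T`), whose quotient is one-dimensional,
concentrated at the vertex `i`, with all induced maps zero. -/
theorem amu_extension_of_removable (ℓ : ℕ) [NeZero ℓ] (hℓ : 2 ≤ ℓ) (J : Set (ZMod ℓ))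
    (θ : ZMod ℓ → ℂ) (hst : JStandard ℓ J θ) (ha : ∑ i : ZMod ℓ, θ i ≠ 0)
    (μ μ' : YoungDiagram) (b : ℕ × ℕ) (hb : IsRemovable μ b) (hbJ : res ℓ b ∈ J)
    (hμ' : μ'.cells = μ.cells.erase b) :
    (∃ S : Submodule ℂ (V μ), S ≤ Vmod ℓ μ (res ℓ b) ∧ Module.finrank ℂ ↥S = 1 ∧
      (∀ v ∈ S, Xmap μ v = 0 ∧ Ymap ℓ θ μ v = 0 ∧ ymap μ v = 0) ∧
      ∃ (c : ℂˣ) (π : V μ →ₗ[ℂ] V μ'),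
        Function.Surjective π ∧ LinearMap.ker π = S ∧
        (∀ i : ZMod ℓ, (Vmod ℓ μ i).map π = Vmod ℓ μ' i) ∧
        π ∘ₗ Xmap μ = Xmap μ' ∘ₗ π ∧
        π ∘ₗ Ymap ℓ θ μ = Ymap ℓ θ μ' ∘ₗ π ∧
        π ∘ₗ xmap ℓ θ μ = (c : ℂ) • xmap ℓ θ μ' ∧
        ymap μ' ∘ₗ π = (c : ℂ) • ymap μ) ∨
    (∃ T : Submodule ℂ (V μ),
      (∀ v ∈ T, Xmap μ v ∈ T ∧ Ymap ℓ θ μ v ∈ T) ∧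
      (∀ z : ℂ, xmap ℓ θ μ z ∈ T) ∧
      Module.finrank ℂ (V μ ⧸ T) = 1 ∧
      (∀ i : ZMod ℓ, i ≠ res ℓ b → Vmod ℓ μ i ≤ T) ∧
      (∀ v : V μ, Xmap μ v ∈ T) ∧ (∀ v : V μ, Ymap ℓ θ μ v ∈ T) ∧
      ∃ (c : ℂˣ) (ι : V μ' →ₗ[ℂ] V μ),
        Function.Injective ι ∧ LinearMap.range ι = T ∧
        (∀ i : ZMod ℓ, (Vmod ℓ μ' i).map ι = Vmod ℓ μ i ⊓ T) ∧
        ι ∘ₗ Xmap μ' = Xmap μ ∘ₗ ι ∧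
        ι ∘ₗ Ymap ℓ θ μ' = Ymap ℓ θ μ ∘ₗ ι ∧
        ι ∘ₗ xmap ℓ θ μ' = (c : ℂ) • xmap ℓ θ μ ∧
        ymap μ ∘ₗ ι = (c : ℂ) • ymap μ') := by
  have hθ0 : θ (res ℓ b) = 0 := theta_res_zero ℓ J θ hst hbJ
  rcases le_or_gt b.1 b.2 with hle | hlt
  · exact Or.inr (armCase ℓ θ μ μ' b hθ0 hb.1 hμ' hle)
  · exact Or.inl (legCase ℓ θ μ μ' b hθ0 hb.1 hμ' hlt)

end CM
end

section
/- Let ℓ ≥ 1 and θ ∈ ℂ^(ℤ/ℓℤ) with Σ_{i ∈ ℤ/ℓℤ} θ_i ≠ 0, and let (X, Y, x, y) be a simple framed θ-representation with dimension vector d ∈ ℕ^(ℤ/ℓℤ). Then any two ℤ-gradings of (X, Y, x, y) coincide: if (V_j)_{j∈ℤ} and (V′_j)_{j∈ℤ} are two ℤ-gradings, then V_j = V′_j for all j ∈ ℤ. -/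
namespace CM

/-- Transport along an equality of vertices. -/
def castMap {ℓ : ℕ} (d : ZMod ℓ → ℕ) {i j : ZMod ℓ} (h : i = j) :
    (Fin (d i) → ℂ) →ₗ[ℂ] (Fin (d j) → ℂ) :=
  LinearMap.funLeft ℂ ℂ (Fin.cast (congrArg d h.symm))

/-- A framed `θ`-representation of the cyclic quiver with dimension vector `d`
(dimension `1` at the framing vertex `∞`).  The moment map relation at the vertex
`i + 1` reads `X_{i+1} ∘ Y_{i+1} - Y_i ∘ X_i + δ_{i+1,0} · x ∘ y = θ_{i+1} · id`. -/
structure FRep (ℓ : ℕ) (θ : ZMod ℓ → ℂ) (d : ZMod ℓ → ℕ) where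
  X : ∀ i : ZMod ℓ, (Fin (d (i + 1)) → ℂ) →ₗ[ℂ] (Fin (d i) → ℂ)
  Y : ∀ i : ZMod ℓ, (Fin (d i) → ℂ) →ₗ[ℂ] (Fin (d (i + 1)) → ℂ)
  x : ℂ →ₗ[ℂ] (Fin (d 0) → ℂ)
  y : (Fin (d 0) → ℂ) →ₗ[ℂ] ℂ
  rel : ∀ i : ZMod ℓ,
    X (i + 1) ∘ₗ Y (i + 1) - Y i ∘ₗ X i +
      (if h : i + 1 = (0 : ZMod ℓ) then castMap d h.symm ∘ₗ x ∘ₗ y ∘ₗ castMap d h else 0) =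
    θ (i + 1) • LinearMap.id

/-- A subrepresentation of a framed representation. -/
structure FSubrep {ℓ : ℕ} {θ : ZMod ℓ → ℂ} {d : ZMod ℓ → ℕ} (R : FRep ℓ θ d) where
  U : ∀ i : ZMod ℓ, Submodule ℂ (Fin (d i) → ℂ)
  Uinf : Submodule ℂ ℂ
  hX : ∀ i : ZMod ℓ, ∀ v ∈ U (i + 1), R.X i v ∈ U i
  hY : ∀ i : ZMod ℓ, ∀ v ∈ U i, R.Y i v ∈ U (i + 1)
  hx : ∀ z ∈ Uinf, R.x z ∈ U 0
  hy : ∀ v ∈ U 0, R.y v ∈ Uinf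

/-- A framed representation is simple if its only subrepresentations are zero and itself. -/
def FSimple {ℓ : ℕ} {θ : ZMod ℓ → ℂ} {d : ZMod ℓ → ℕ} (R : FRep ℓ θ d) : Prop :=
  ∀ S : FSubrep R,
    ((∀ i, S.U i = ⊥) ∧ S.Uinf = ⊥) ∨ ((∀ i, S.U i = ⊤) ∧ S.Uinf = ⊤)

/-- `E_θ`: the set of dimension vectors of simple framed `θ`-representations. -/
def Eset (ℓ : ℕ) (θ : ZMod ℓ → ℂ) : Set (ZMod ℓ → ℕ) :=
  {d | ∃ R : FRep ℓ θ d, FSimple R}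

/-- A `ℤ`-grading of a framed representation `(X, Y, x, y)`: subspaces
`V_j ⊆ ℂ^{d_{j mod ℓ}}` such that each vertex space is the internal direct sum of the
`V_j` with `j ≡ i mod ℓ`, `X` and `Y` lower/raise degree by one, the image of `x` lies
in `V_0`, and `y` vanishes on each `V_j`, `j ≠ 0`. -/
def IsZGrading {ℓ : ℕ} {θ : ZMod ℓ → ℂ} {d : ZMod ℓ → ℕ} (R : FRep ℓ θ d)
    (Vg : ∀ j : ℤ, Submodule ℂ (Fin (d ((j : ZMod ℓ))) → ℂ)) : Prop :=
  (∀ i : ZMod ℓ, DirectSum.IsInternal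
      (fun j : {j : ℤ // ((j : ℤ) : ZMod ℓ) = i} => (Vg j.1).map (castMap d j.2))) ∧
  (∀ j : ℤ, ∀ v ∈ Vg (j + 1),
    R.X (j : ZMod ℓ)
      (castMap d (by push_cast; ring : ((j + 1 : ℤ) : ZMod ℓ) = (j : ZMod ℓ) + 1) v)
      ∈ Vg j) ∧
  (∀ j : ℤ, ∀ v ∈ Vg j,
    castMap d (by push_cast; ring : ((j : ZMod ℓ) + 1) = ((j + 1 : ℤ) : ZMod ℓ))
      (R.Y (j : ZMod ℓ) v) ∈ Vg (j + 1)) ∧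
  (∀ z : ℂ,
    castMap d (by push_cast; ring : (0 : ZMod ℓ) = ((0 : ℤ) : ZMod ℓ)) (R.x z) ∈ Vg 0) ∧
  (∀ j : ℤ, j ≠ 0 → ∀ h : ((j : ℤ) : ZMod ℓ) = 0, ∀ v ∈ Vg j, R.y (castMap d h v) = 0)

/-!
The pieces `V_j ∩ V'_j` of two gradings are again moved by `X` and `Y` to each other and
contain the image of `x`, so together with the whole framing line they span a
subrepresentation. It is nonzero at `∞`, hence everything by simplicity. As the `V_j`
are independent, subspaces `W_j ⊆ V_j` that span everything must equal the `V_j`; thus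
`V_j = V_j ∩ V'_j = V'_j`.
-/

variable {ℓ : ℕ} {θ : ZMod ℓ → ℂ} {d : ZMod ℓ → ℕ}

@[simp]
lemma castMap_rfl (i : ZMod ℓ) : castMap d (rfl : i = i) = LinearMap.id := rfl

def gradedSum (W : ∀ j : ℤ, Submodule ℂ (Fin (d j) → ℂ)) (i : ZMod ℓ) :
    Submodule ℂ (Fin (d i) → ℂ) :=
  ⨆ k : {k : ℤ // (k : ZMod ℓ) = i}, (W k).map (castMap d k.2)

structure IsGradedSubrep (R : FRep ℓ θ d) (W : ∀ j : ℤ, Submodule ℂ (Fin (d j) → ℂ)) :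
    Prop where
  map_X : ∀ j : ℤ, ∀ v ∈ W (j + 1),
    R.X (j : ZMod ℓ)
      (castMap d (by push_cast; ring : ((j + 1 : ℤ) : ZMod ℓ) = (j : ZMod ℓ) + 1) v) ∈ W j
  map_Y : ∀ j : ℤ, ∀ v ∈ W j,
    castMap d (by push_cast; ring : ((j : ZMod ℓ) + 1) = ((j + 1 : ℤ) : ZMod ℓ))
      (R.Y (j : ZMod ℓ) v) ∈ W (j + 1)
  x_mem : ∀ z : ℂ,
    castMap d (by push_cast; ring : (0 : ZMod ℓ) = ((0 : ℤ) : ZMod ℓ)) (R.x z) ∈ W 0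

variable {R : FRep ℓ θ d} {W W' : ∀ j : ℤ, Submodule ℂ (Fin (d j) → ℂ)}

lemma IsZGrading.isGradedSubrep (h : IsZGrading R W) : IsGradedSubrep R W :=
  ⟨h.2.1, h.2.2.1, h.2.2.2.1⟩

lemma IsGradedSubrep.inf (hW : IsGradedSubrep R W) (hW' : IsGradedSubrep R W') :
    IsGradedSubrep R (W ⊓ W') where
  map_X j v hv := ⟨hW.map_X j v hv.1, hW'.map_X j v hv.2⟩
  map_Y j v hv := ⟨hW.map_Y j v hv.1, hW'.map_Y j v hv.2⟩
  x_mem z := ⟨hW.x_mem z, hW'.x_mem z⟩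

def IsGradedSubrep.toFSubrep (hW : IsGradedSubrep R W) : FSubrep R where
  U := gradedSum W
  Uinf := ⊤
  hX i v hv := by
    refine (iSup_le fun k => ?_ : gradedSum W (i + 1) ≤ (gradedSum W i).comap (R.X i)) hv
    obtain ⟨k, hk⟩ := k
    obtain ⟨j, rfl⟩ : ∃ j : ℤ, k = j + 1 := ⟨k - 1, by ring⟩
    obtain rfl : ((j : ℤ) : ZMod ℓ) = i := by
      push_cast at hk
      exact add_right_cancel hk
    rintro _ ⟨w, hw, rfl⟩
    exact Submodule.mem_iSup_of_mem ⟨j, rfl⟩ ⟨_, hW.map_X j w hw, rfl⟩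
  hY i v hv := by
    refine (iSup_le fun k => ?_ : gradedSum W i ≤ (gradedSum W (i + 1)).comap (R.Y i)) hv
    obtain ⟨j, rfl⟩ := k
    rintro _ ⟨w, hw, rfl⟩
    exact Submodule.mem_iSup_of_mem ⟨j + 1, by push_cast; ring⟩ ⟨_, hW.map_Y j w hw, rfl⟩
  hx z _ := Submodule.mem_iSup_of_mem ⟨0, by push_cast; ring⟩ ⟨_, hW.x_mem z, rfl⟩
  hy _ _ := Submodule.mem_top

lemma FSimple.gradedSum_eq_top (hR : FSimple R) (hW : IsGradedSubrep R W) (i : ZMod ℓ) :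
    gradedSum W i = ⊤ := by
  rcases hR hW.toFSubrep with ⟨-, hbot⟩ | ⟨htop, -⟩
  · exact absurd hbot top_ne_bot
  · exact htop i

lemma IsZGrading.eq_of_le (h : IsZGrading R W) (hR : FSimple R) (hW' : IsGradedSubrep R W')
    (hle : W' ≤ W) : W' = W := by
  funext j
  have hpieces := ((h.1 j).submodule_iSupIndep.le_iff_eq_of_iSup_eq_top
    (hR.gradedSum_eq_top hW' j)).mp fun k => Submodule.map_mono (hle k)
  simpa using congrFun hpieces ⟨j, rfl⟩

theorem zgrading_unique_general (ℓ : ℕ) (θ : ZMod ℓ → ℂ)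
    (d : ZMod ℓ → ℕ) (R : FRep ℓ θ d) (hR : FSimple R)
    (Vg Vg' : ∀ j : ℤ, Submodule ℂ (Fin (d ((j : ZMod ℓ))) → ℂ))
    (h : IsZGrading R Vg) (h' : IsZGrading R Vg') : Vg = Vg' := by
  have hinf := h.isGradedSubrep.inf h'.isGradedSubrep
  calc Vg = Vg ⊓ Vg' := (h.eq_of_le hR hinf inf_le_left).symm
    _ = Vg' := h'.eq_of_le hR hinf inf_le_right

/-- If `∑ θ_i ≠ 0`, a simple framed `θ`-representation admits at most
one `ℤ`-grading. -/
theorem zgrading_unique (ℓ : ℕ) [NeZero ℓ] (θ : ZMod ℓ → ℂ)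
    (ha : ∑ i : ZMod ℓ, θ i ≠ 0) (d : ZMod ℓ → ℕ) (R : FRep ℓ θ d) (hR : FSimple R)
    (Vg Vg' : ∀ j : ℤ, Submodule ℂ (Fin (d ((j : ZMod ℓ))) → ℂ))
    (h : IsZGrading R Vg) (h' : IsZGrading R Vg') : Vg = Vg' :=
  zgrading_unique_general ℓ θ d R hR Vg Vg' h h'

end CM
end
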